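/- arXiv:math/0605604 — 3 statements merged into one kernel-verified Lean document; each statement's English description precedes it below -/
import Mathlib

section
/- Let f : U → ℝ³ be a smooth map on an open set U ⊆ ℝ² with a smooth unit normal ν : U → S², and suppose at a point p the partial derivative f_u vanishes. Then f_u·ν_v = -f_{uv}·ν = f_v·ν_u at p; in particular, if the pair (f,ν) is an immersion at p and f_v(p) ≠ 0, then ν_u(p) ≠ 0 and the vectors ν_u(p), f_v(p) are orthogonal (hence linearly independent). -/
open Matrix

/-- Partial derivative of a map `ℝ × ℝ → (Fin 3 → ℝ)` in direction `w`. -/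
noncomputable def pd (f : ℝ × ℝ → (Fin 3 → ℝ)) (w : ℝ × ℝ) (p : ℝ × ℝ) : Fin 3 → ℝ :=
  fderiv ℝ f p w

/-- Product rule for the dot product. -/
lemma fderiv_dot {g h : ℝ × ℝ → Fin 3 → ℝ} {p : ℝ × ℝ} (w : ℝ × ℝ)
    (hg : DifferentiableAt ℝ g p) (hh : DifferentiableAt ℝ h p) :
    fderiv ℝ (fun q => g q ⬝ᵥ h q) p w =
      fderiv ℝ g p w ⬝ᵥ h p + g p ⬝ᵥ fderiv ℝ h p w := by
  have key : HasFDerivAt (fun q => g q ⬝ᵥ h q)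
      (∑ i : Fin 3, (g p i • (ContinuousLinearMap.proj i).comp (fderiv ℝ h p)
        + h p i • (ContinuousLinearMap.proj i).comp (fderiv ℝ g p))) p := by
    have hi : ∀ i : Fin 3, HasFDerivAt (fun q => g q i * h q i)
        (g p i • (ContinuousLinearMap.proj i).comp (fderiv ℝ h p)
          + h p i • (ContinuousLinearMap.proj i).comp (fderiv ℝ g p)) p := fun i => by
      have := (((ContinuousLinearMap.proj (R := ℝ) (φ := fun _ : Fin 3 => ℝ)
          i).hasFDerivAt).comp p hg.hasFDerivAt).mul
        (((ContinuousLinearMap.proj (R := ℝ) (φ := fun _ : Fin 3 => ℝ)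
          i).hasFDerivAt).comp p hh.hasFDerivAt)
      simpa [Function.comp_def, Pi.mul_def] using this
    simpa [dotProduct] using HasFDerivAt.fun_sum (fun i (_ : i ∈ Finset.univ) => hi i)
  rw [key.fderiv]
  simp only [ContinuousLinearMap.sum_apply, ContinuousLinearMap.add_apply,
    ContinuousLinearMap.smul_apply, ContinuousLinearMap.coe_comp', Function.comp,
    ContinuousLinearMap.proj_apply, smul_eq_mul, dotProduct, Finset.sum_add_distrib,
    mul_comm]
  exact add_comm _ _

/-- If `f_u` vanishes at `p`, then `f_u·ν_v = -f_{uv}·ν = f_v·ν_u` at `p`;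
if moreover `(f,ν)` is an immersion at `p` and `f_v(p) ≠ 0`, then `ν_u(p) ≠ 0` and
`ν_u(p)`, `f_v(p)` are orthogonal. -/
theorem stmt0 (f ν : ℝ × ℝ → (Fin 3 → ℝ)) (U : Set (ℝ × ℝ)) (hU : IsOpen U)
    (p : ℝ × ℝ) (hp : p ∈ U)
    (hf : ContDiffOn ℝ (⊤ : ℕ∞) f U) (hν : ContDiffOn ℝ (⊤ : ℕ∞) ν U)
    (hunit : ∀ q ∈ U, ν q ⬝ᵥ ν q = 1)
    (hperp_u : ∀ q ∈ U, ν q ⬝ᵥ pd f (1, 0) q = 0)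
    (hperp_v : ∀ q ∈ U, ν q ⬝ᵥ pd f (0, 1) q = 0)
    (hfu : pd f (1, 0) p = 0) :
    (pd f (1, 0) p ⬝ᵥ pd ν (0, 1) p = -(pd (pd f (1, 0)) (0, 1) p ⬝ᵥ ν p) ∧
      -(pd (pd f (1, 0)) (0, 1) p ⬝ᵥ ν p) = pd f (0, 1) p ⬝ᵥ pd ν (1, 0) p) ∧
    ((Function.Injective (fderiv ℝ (fun q => (f q, ν q)) p) ∧ pd f (0, 1) p ≠ 0) →
      pd ν (1, 0) p ≠ 0 ∧ pd ν (1, 0) p ⬝ᵥ pd f (0, 1) p = 0) := by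
  have hUnhds : U ∈ nhds p := hU.mem_nhds hp
  have hf' : ContDiffOn ℝ (⊤ : ℕ∞) (fderiv ℝ f) U := hf.fderiv_of_isOpen hU (by simp)
  have hdf : DifferentiableAt ℝ f p := (hf.contDiffAt hUnhds).differentiableAt (by simp)
  have hdν : DifferentiableAt ℝ ν p := (hν.contDiffAt hUnhds).differentiableAt (by simp)
  have hdf' : DifferentiableAt ℝ (fderiv ℝ f) p :=
    (hf'.contDiffAt hUnhds).differentiableAt (by simp)
  have hdpd : ∀ w : ℝ × ℝ, DifferentiableAt ℝ (pd f w) p := fun w =>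
    hdf'.clm_apply (differentiableAt_const w)
  -- second derivative commutation
  have pd_eq : ∀ w w' : ℝ × ℝ, pd (pd f w) w' p = fderiv ℝ (fderiv ℝ f) p w' w := by
    intro w w'
    show fderiv ℝ (fun q => fderiv ℝ f q w) p w' = _
    rw [fderiv_clm_apply hdf' (differentiableAt_const w)]
    simp
  have hsymm : fderiv ℝ (fderiv ℝ f) p (1, 0) (0, 1) = fderiv ℝ (fderiv ℝ f) p (0, 1) (1, 0) := by
    have hev : ∀ᶠ y in nhds p, HasFDerivAt f (fderiv ℝ f y) y := by
      filter_upwards [hUnhds] with q hq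
      exact ((hf.contDiffAt (hU.mem_nhds hq)).differentiableAt (by simp)).hasFDerivAt
    exact second_derivative_symmetric_of_eventually hev hdf'.hasFDerivAt _ _
  -- derivatives of the perpendicularity relations vanish
  have hzero : ∀ w₀ : ℝ × ℝ, (∀ q ∈ U, ν q ⬝ᵥ pd f w₀ q = 0) → ∀ w : ℝ × ℝ,
      fderiv ℝ ν p w ⬝ᵥ pd f w₀ p + ν p ⬝ᵥ fderiv ℝ (pd f w₀) p w = 0 := by
    intro w₀ hw₀ w
    have heq : (fun q => ν q ⬝ᵥ pd f w₀ q) =ᶠ[nhds p] fun _ => (0 : ℝ) :=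
      Filter.eventuallyEq_of_mem hUnhds (fun q hq => hw₀ q hq)
    have h0 : fderiv ℝ (fun q => ν q ⬝ᵥ pd f w₀ q) p w = 0 := by
      rw [heq.fderiv_eq]; simp
    rw [← fderiv_dot w hdν (hdpd w₀)] ; exact h0
  have eq1 : ν p ⬝ᵥ pd (pd f (1, 0)) (0, 1) p = 0 := by
    have := hzero (1, 0) hperp_u (0, 1)
    rw [hfu] at this
    simpa [pd] using this
  have eq2 : fderiv ℝ ν p (1, 0) ⬝ᵥ pd f (0, 1) p + ν p ⬝ᵥ pd (pd f (0, 1)) (1, 0) p = 0 :=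
    hzero (0, 1) hperp_v (1, 0)
  have hmixed : ν p ⬝ᵥ pd (pd f (0, 1)) (1, 0) p = 0 := by
    rw [pd_eq, hsymm, ← pd_eq]; exact eq1
  have eq2' : pd ν (1, 0) p ⬝ᵥ pd f (0, 1) p = 0 := by
    have := eq2
    rw [hmixed] at this
    simpa [pd] using this
  refine ⟨⟨?_, ?_⟩, ?_⟩
  · rw [hfu, dotProduct_comm _ (ν p), eq1]
    simp
  · rw [dotProduct_comm _ (ν p), eq1, dotProduct_comm (pd f (0, 1) p), eq2']
    simp
  · rintro ⟨hinj, _⟩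
    refine ⟨?_, eq2'⟩
    intro hνu
    have hfd : fderiv ℝ (fun q => (f q, ν q)) p = (fderiv ℝ f p).prod (fderiv ℝ ν p) :=
      hdf.fderiv_prodMk hdν
    have hz : fderiv ℝ (fun q => (f q, ν q)) p ((1 : ℝ), (0 : ℝ)) =
        fderiv ℝ (fun q => (f q, ν q)) p 0 := by
      rw [hfd]
      simp only [ContinuousLinearMap.prod_apply, map_zero]
      have h1 : fderiv ℝ f p (1, 0) = 0 := hfu
      have h2 : fderiv ℝ ν p (1, 0) = 0 := hνu
      rw [h1, h2]
      rfl
    have := hinj hz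
    simp [Prod.ext_iff] at this
end

section
/- Let f : U → ℝ³ be a front with unit normal ν, and let p be a singular point of f (i.e. df_p has rank < 2). Then for every sufficiently small nonzero real δ, the parallel map f_δ = f + δν is an immersion at p. -/
open Matrix

/-- Injectivity from trivial kernel, and converse extraction. -/
lemma inj_of_ker (L : (ℝ × ℝ) →L[ℝ] (Fin 3 → ℝ)) (h : ∀ w, L w = 0 → w = 0) :
    Function.Injective L := by
  intro x y hxy
  have h1 : L (x - y) = 0 := by rw [map_sub, hxy, sub_self]
  have := h _ h1
  exact sub_eq_zero.mp this

lemma exists_ker_of_not_inj (L : (ℝ × ℝ) →L[ℝ] (Fin 3 → ℝ))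
    (h : ¬ Function.Injective L) : ∃ x, x ≠ 0 ∧ L x = 0 := by
  by_contra hc
  push_neg at hc
  exact h (inj_of_ker L (fun w hw => by
    by_contra hw0
    exact (hc w hw0) hw))

lemma core (A B : (ℝ × ℝ) →L[ℝ] (Fin 3 → ℝ))
    (sym : ∀ x y, A x ⬝ᵥ B y = A y ⬝ᵥ B x)
    (front : ∀ w, A w = 0 → B w = 0 → w = 0)
    (w₀ : ℝ × ℝ) (hw₀ : w₀ ≠ 0) (hAw₀ : A w₀ = 0) :
    ∃ ε > 0, ∀ δ : ℝ, δ ≠ 0 → |δ| < ε → Function.Injective ⇑(A + δ • B) := by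
  have hBw₀ : B w₀ ≠ 0 := fun h => hw₀ (front _ hAw₀ h)
  set d : ℝ := B w₀ ⬝ᵥ B w₀ with hd_def
  have hd : d ≠ 0 := fun h => hBw₀ (dotProduct_self_eq_zero.mp h)
  set w₁ : ℝ × ℝ := (-w₀.2, w₀.1) with hw₁_def
  set c : ℝ := -(B w₁ ⬝ᵥ B w₀) / d with hc_def
  set y : ℝ × ℝ := w₁ + c • w₀ with hy_def
  have hyne : y ≠ 0 := by
    intro h
    have h1 : -w₀.2 + c * w₀.1 = 0 := congrArg Prod.fst h
    have h2 : w₀.1 + c * w₀.2 = 0 := congrArg Prod.snd h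
    have e : w₀.1 * (1 + c ^ 2) = 0 := by linear_combination c * h1 + h2
    have hx1 : w₀.1 = 0 := by
      rcases mul_eq_zero.mp e with h' | h'
      · exact h'
      · nlinarith [sq_nonneg c]
    have hx2 : w₀.2 = 0 := by rw [hx1] at h1; linarith
    exact hw₀ (Prod.ext hx1 hx2)
  -- normalization: each kernel vector of A + δB is a multiple of y
  have key : ∀ δ : ℝ, δ ≠ 0 → ∀ x : ℝ × ℝ, x ≠ 0 → A x + δ • B x = 0 →
      A y + δ • B y = 0 := by
    intro δ hδ x hx h
    have n2pos : (0:ℝ) < w₀.1 ^ 2 + w₀.2 ^ 2 := by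
      rcases Prod.mk.injEq w₀.1 w₀.2 0 0 ▸ (fun h' => hw₀ h') with _
      have : w₀.1 ≠ 0 ∨ w₀.2 ≠ 0 := by
        by_contra hcon
        push_neg at hcon
        exact hw₀ (Prod.ext hcon.1 hcon.2)
      rcases this with h' | h' <;> positivity
    set n2 : ℝ := w₀.1 ^ 2 + w₀.2 ^ 2 with hn2
    set a : ℝ := (x.1 * w₀.1 + x.2 * w₀.2) / n2 with ha_def
    set b : ℝ := (-x.1 * w₀.2 + x.2 * w₀.1) / n2 with hb_def
    have hxdec : x = a • w₀ + b • w₁ := by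
      apply Prod.ext <;>
      · simp only [Prod.fst_add, Prod.snd_add, Prod.smul_fst, Prod.smul_snd, smul_eq_mul,
          ha_def, hb_def, hw₁_def]
        field_simp
        ring
    -- B x ⬝ᵥ B w₀ = 0
    have step1 : B x ⬝ᵥ B w₀ = 0 := by
      have h1 : (A x + δ • B x) ⬝ᵥ B w₀ = 0 := by rw [h, zero_dotProduct]
      rw [add_dotProduct, smul_dotProduct] at h1
      have h2 : A x ⬝ᵥ B w₀ = 0 := by rw [sym x w₀, hAw₀, zero_dotProduct]
      rw [h2, zero_add, smul_eq_mul] at h1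
      exact (mul_eq_zero.mp h1).resolve_left hδ
    -- a = b * c
    have step2 : a = b * c := by
      have h1 : B x ⬝ᵥ B w₀ = a * d + b * (B w₁ ⬝ᵥ B w₀) := by
        rw [hxdec, map_add, B.map_smul, B.map_smul, add_dotProduct, smul_dotProduct,
          smul_dotProduct, smul_eq_mul, smul_eq_mul, hd_def]
      rw [step1] at h1
      have hcd : c * d = -(B w₁ ⬝ᵥ B w₀) := by rw [hc_def]; field_simp
      have h2 : a * d = b * c * d := by rw [mul_assoc, hcd]; linarith
      exact mul_right_cancel₀ hd h2
    have hb : b ≠ 0 := by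
      intro hb0
      apply hx
      rw [hxdec, step2, hb0, zero_mul, zero_smul, zero_smul, add_zero]
    have hxy : x = b • y := by
      rw [hxdec, step2, hy_def]
      module
    have : b • (A y + δ • B y) = 0 := by
      rw [smul_add, ← A.map_smul, smul_comm b δ, ← B.map_smul, ← hxy]
      exact h
    rcases smul_eq_zero.mp this with h' | h'
    · exact absurd h' hb
    · exact h'
  -- at most one bad nonzero δ
  have uniq : ∀ δ₁ δ₂ : ℝ, δ₁ ≠ 0 → δ₂ ≠ 0 →
      ¬ Function.Injective ⇑(A + δ₁ • B) → ¬ Function.Injective ⇑(A + δ₂ • B) → δ₁ = δ₂ := by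
    intro δ₁ δ₂ h1 h2 hn1 hn2
    obtain ⟨x₁, hx₁, hk₁⟩ := exists_ker_of_not_inj _ hn1
    obtain ⟨x₂, hx₂, hk₂⟩ := exists_ker_of_not_inj _ hn2
    have e1 : A y + δ₁ • B y = 0 := key δ₁ h1 x₁ hx₁ (by simpa using hk₁)
    have e2 : A y + δ₂ • B y = 0 := key δ₂ h2 x₂ hx₂ (by simpa using hk₂)
    have hBy : B y ≠ 0 := by
      intro hBy0
      have : A y = 0 := by rw [hBy0, smul_zero, add_zero] at e1; exact e1
      exact hyne (front y this hBy0)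
    have : (δ₁ - δ₂) • B y = 0 := by
      have := sub_eq_zero.mpr (e1.trans e2.symm)
      rw [add_sub_add_left_eq_sub, ← sub_smul] at this
      exact this
    rcases smul_eq_zero.mp this with h' | h'
    · exact sub_eq_zero.mp h'
    · exact absurd h' hBy
  by_cases hbad : ∃ δ : ℝ, δ ≠ 0 ∧ ¬ Function.Injective ⇑(A + δ • B)
  · obtain ⟨δ₀, hδ₀, hbad₀⟩ := hbad
    refine ⟨|δ₀|, abs_pos.mpr hδ₀, fun δ hδ hlt => ?_⟩
    by_contra hni
    have := uniq δ δ₀ hδ hδ₀ hni hbad₀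
    rw [this] at hlt
    exact lt_irrefl _ hlt
  · push_neg at hbad
    exact ⟨1, one_pos, fun δ hδ _ => hbad δ hδ⟩


/-- If `ν ⬝ᵥ h = 0` near `p`, then the product-rule expression vanishes. -/
lemma perp_deriv {ν h : ℝ × ℝ → (Fin 3 → ℝ)} {B D : (ℝ × ℝ) →L[ℝ] (Fin 3 → ℝ)} {p : ℝ × ℝ}
    (hν : HasFDerivAt ν B p) (hh : HasFDerivAt h D p)
    (hzero : ∀ᶠ q in nhds p, ν q ⬝ᵥ h q = 0) :
    ∀ w, B w ⬝ᵥ h p + ν p ⬝ᵥ D w = 0 := by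
  have hder : ∀ i : Fin 3, HasFDerivAt (fun q => ν q i * h q i)
      (ν p i • ((ContinuousLinearMap.proj i).comp D) +
        h p i • ((ContinuousLinearMap.proj i).comp B)) p := by
    intro i
    have h1 : HasFDerivAt (fun q => ν q i) ((ContinuousLinearMap.proj i).comp B) p :=
      ((ContinuousLinearMap.proj (R := ℝ) (φ := fun _ : Fin 3 => ℝ) i).hasFDerivAt).comp p hν
    have h2 : HasFDerivAt (fun q => h q i) ((ContinuousLinearMap.proj i).comp D) p :=
      ((ContinuousLinearMap.proj (R := ℝ) (φ := fun _ : Fin 3 => ℝ) i).hasFDerivAt).comp p hh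
    exact h1.mul h2
  have hsum : HasFDerivAt (fun q => ν q ⬝ᵥ h q)
      (∑ i : Fin 3, (ν p i • ((ContinuousLinearMap.proj i).comp D) +
        h p i • ((ContinuousLinearMap.proj i).comp B))) p := by
    have := HasFDerivAt.fun_sum (fun i (_ : i ∈ Finset.univ) => hder i)
    simpa [dotProduct] using this
  have hzero' : HasFDerivAt (fun q => ν q ⬝ᵥ h q) (0 : (ℝ × ℝ) →L[ℝ] ℝ) p :=
    (hasFDerivAt_const (0 : ℝ) p).congr_of_eventuallyEq hzero
  have heq := hsum.unique hzero'
  intro w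
  have := congrFun (congrArg DFunLike.coe heq) w
  simp only [ContinuousLinearMap.sum_apply, ContinuousLinearMap.add_apply,
    ContinuousLinearMap.smul_apply, ContinuousLinearMap.comp_apply,
    ContinuousLinearMap.proj_apply, ContinuousLinearMap.zero_apply, smul_eq_mul] at this
  simp only [dotProduct]
  rw [← Finset.sum_add_distrib]
  rw [← this]
  apply Finset.sum_congr rfl
  intro i _
  ring

/-- If `p` is a singular point of a front `f` with unit normal `ν`,
then for every sufficiently small nonzero `δ`, the parallel map `f + δν` is an
immersion at `p`. -/
theorem stmt1 (f ν : ℝ × ℝ → (Fin 3 → ℝ)) (U : Set (ℝ × ℝ)) (hU : IsOpen U)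
    (p : ℝ × ℝ) (hp : p ∈ U)
    (hf : ContDiffOn ℝ (⊤ : ℕ∞) f U) (hν : ContDiffOn ℝ (⊤ : ℕ∞) ν U)
    (hunit : ∀ q ∈ U, ν q ⬝ᵥ ν q = 1)
    (hperp_u : ∀ q ∈ U, ν q ⬝ᵥ pd f (1, 0) q = 0)
    (hperp_v : ∀ q ∈ U, ν q ⬝ᵥ pd f (0, 1) q = 0)
    (hfront : ∀ q ∈ U, Function.Injective (fderiv ℝ (fun x => (f x, ν x)) q))
    (hsing : ¬ Function.Injective (fderiv ℝ f p)) :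
    ∃ ε > 0, ∀ δ : ℝ, δ ≠ 0 → |δ| < ε →
      Function.Injective (fderiv ℝ (fun q => f q + δ • ν q) p) := by
  have hUp : U ∈ nhds p := hU.mem_nhds hp
  set A : (ℝ × ℝ) →L[ℝ] (Fin 3 → ℝ) := fderiv ℝ f p with hA_def
  set B : (ℝ × ℝ) →L[ℝ] (Fin 3 → ℝ) := fderiv ℝ ν p with hB_def
  have hfA : ContDiffAt ℝ (⊤ : ℕ∞) f p := hf.contDiffAt hUp
  have hνA : ContDiffAt ℝ (⊤ : ℕ∞) ν p := hν.contDiffAt hUp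
  have hA : HasFDerivAt f A p := (hfA.differentiableAt (by simp)).hasFDerivAt
  have hB : HasFDerivAt ν B p := (hνA.differentiableAt (by simp)).hasFDerivAt
  -- second derivative
  have hf' : ContDiffAt ℝ (⊤ : ℕ∞) (fderiv ℝ f) p := hfA.fderiv_right (by simp)
  set F2 : (ℝ × ℝ) →L[ℝ] (ℝ × ℝ) →L[ℝ] (Fin 3 → ℝ) := fderiv ℝ (fderiv ℝ f) p with hF2_def
  have hF2 : HasFDerivAt (fderiv ℝ f) F2 p := (hf'.differentiableAt (by simp)).hasFDerivAt
  have hevd : ∀ᶠ y in nhds p, HasFDerivAt f (fderiv ℝ f y) y := by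
    filter_upwards [hU.eventually_mem hp] with y hy
    exact ((hf.contDiffAt (hU.mem_nhds hy)).differentiableAt (by simp)).hasFDerivAt
  have hF2symm : ∀ v w, F2 v w = F2 w v :=
    second_derivative_symmetric_of_eventually hevd hF2
  -- derivative of q ↦ fderiv ℝ f q e
  have hDe : ∀ e : ℝ × ℝ, HasFDerivAt (fun q => fderiv ℝ f q e) (F2.flip e) p := by
    intro e
    have := hF2.clm_apply (hasFDerivAt_const e p)
    simpa using this
  -- the perpendicularity derivative identities
  have hperp' : ∀ e : ℝ × ℝ, (∀ q ∈ U, ν q ⬝ᵥ fderiv ℝ f q e = 0) →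
      ∀ w, B w ⬝ᵥ A e + ν p ⬝ᵥ F2 w e = 0 := by
    intro e he w
    have hz : ∀ᶠ q in nhds p, ν q ⬝ᵥ (fun q => fderiv ℝ f q e) q = 0 := by
      filter_upwards [hUp] with q hq
      exact he q hq
    have := perp_deriv hB (hDe e) hz w
    simpa [ContinuousLinearMap.flip_apply] using this
  have hu := hperp' (1, 0) hperp_u
  have hv := hperp' (0, 1) hperp_v
  -- the key symmetry
  have hkey : A (1,0) ⬝ᵥ B (0,1) = A (0,1) ⬝ᵥ B (1,0) := by
    have h1 := hu (0,1)
    have h2 := hv (1,0)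
    rw [hF2symm (0,1) (1,0)] at h1
    rw [dotProduct_comm (A (1,0)) (B (0,1)), dotProduct_comm (A (0,1)) (B (1,0))]
    linarith
  have sym : ∀ x y : ℝ × ℝ, A x ⬝ᵥ B y = A y ⬝ᵥ B x := by
    intro x y
    have hx : x = x.1 • ((1:ℝ),(0:ℝ)) + x.2 • ((0:ℝ),(1:ℝ)) := by
      ext <;> simp
    have hy : y = y.1 • ((1:ℝ),(0:ℝ)) + y.2 • ((0:ℝ),(1:ℝ)) := by
      ext <;> simp
    rw [hx, hy, map_add, map_add, map_add, map_add,
      A.map_smul, A.map_smul, A.map_smul, A.map_smul,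
      B.map_smul, B.map_smul, B.map_smul, B.map_smul]
    simp only [add_dotProduct, dotProduct_add, smul_dotProduct, dotProduct_smul, smul_eq_mul]
    linear_combination (x.1 * y.2 - x.2 * y.1) * hkey
  -- front condition
  have hprod : fderiv ℝ (fun x => (f x, ν x)) p = A.prod B := (hA.prodMk hB).fderiv
  have front : ∀ w : ℝ × ℝ, A w = 0 → B w = 0 → w = 0 := by
    intro w hAw hBw
    have hinj := hfront p hp
    rw [hprod] at hinj
    have : (A.prod B) w = (A.prod B) 0 := by
      simp [ContinuousLinearMap.prod_apply, hAw, hBw]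
    exact hinj this
  -- singular vector
  obtain ⟨w₀, hw₀, hAw₀⟩ : ∃ w₀ : ℝ × ℝ, w₀ ≠ 0 ∧ A w₀ = 0 := by
    rw [Function.not_injective_iff] at hsing
    obtain ⟨x, y, hxy, hne⟩ := hsing
    exact ⟨x - y, sub_ne_zero.mpr hne, by rw [map_sub, hxy, sub_self]⟩
  obtain ⟨ε, hε, hεP⟩ := core A B sym front w₀ hw₀ hAw₀
  refine ⟨ε, hε, fun δ hδ hlt => ?_⟩
  have : fderiv ℝ (fun q => f q + δ • ν q) p = A + δ • B := (hA.add (hB.const_smul δ)).fderiv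
  rw [this]
  exact hεP δ hδ hlt
end

section
/- Let σ̂ : S¹ → ℝ³ be a bounded continuous map and ξ̂ : S¹ → S² continuous. Define f(t,v) = σ̂(t) + v ξ̂(t). Suppose there are sequences (uₙ,vₙ), (xₙ,yₙ) with f(uₙ,vₙ) = f(xₙ,yₙ), 0 < vₙ ≤ yₙ, vₙ → ∞, uₙ → u_∞, xₙ → x_∞. Then ξ̂(u_∞) = ξ̂(x_∞). (Key estimate: |σ̂(xₙ) - σ̂(uₙ)|/vₙ = |ξ̂(uₙ) - (yₙ/vₙ)ξ̂(xₙ)| ≥ |ξ̂(uₙ) - ξ̂(xₙ)|, using that r ↦ |p - r q|² is nondecreasing for r ≥ 1 when |p| = |q| = 1.) -/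
open Matrix Real Filter

/-- If `f(t,v) = σ̂(t) + v ξ̂(t)` with `σ̂` bounded continuous and `ξ̂`
a continuous spherical curve, and sequences satisfy `f(uₙ,vₙ) = f(xₙ,yₙ)`,
`0 < vₙ ≤ yₙ`, `vₙ → ∞`, `uₙ → u_∞`, `xₙ → x_∞`, then `ξ̂(u_∞) = ξ̂(x_∞)`. -/
theorem stmt14 (σ ξ : ℝ → (Fin 3 → ℝ))
    (hσc : Continuous σ) (hξc : Continuous ξ)
    (hσper : Function.Periodic σ (2 * π)) (hξper : Function.Periodic ξ (2 * π))
    (hbd : ∃ C : ℝ, ∀ t, σ t ⬝ᵥ σ t ≤ C)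
    (hξu : ∀ t, ξ t ⬝ᵥ ξ t = 1)
    (f : ℝ → ℝ → (Fin 3 → ℝ)) (hf : ∀ t v, f t v = σ t + v • ξ t)
    (u x v y : ℕ → ℝ) (uoo xoo : ℝ)
    (heq : ∀ n, f (u n) (v n) = f (x n) (y n))
    (hv : ∀ n, 0 < v n) (hvy : ∀ n, v n ≤ y n)
    (hvtop : Tendsto v atTop atTop)
    (hu : Tendsto u atTop (nhds uoo)) (hx : Tendsto x atTop (nhds xoo)) :
    ξ uoo = ξ xoo := by
  obtain ⟨C, hC⟩ := hbd
  have hself : ∀ a : Fin 3 → ℝ, 0 ≤ a ⬝ᵥ a := fun a =>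
    Finset.sum_nonneg fun i _ => mul_self_nonneg _
  have hC0 : 0 ≤ C := le_trans (hself (σ 0)) (hC 0)
  set D : ℕ → ℝ := fun n => (ξ (u n) - ξ (x n)) ⬝ᵥ (ξ (u n) - ξ (x n)) with hDdef
  -- Key bound
  have hDle : ∀ n, (v n) ^ 2 * D n ≤ 4 * C := by
    intro n
    have he := heq n
    rw [hf, hf] at he
    have hvec : v n • ξ (u n) - y n • ξ (x n) = σ (x n) - σ (u n) := by
      funext i
      have := congrFun he i
      simp only [Pi.add_apply, Pi.smul_apply, smul_eq_mul, Pi.sub_apply] at this ⊢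
      linarith
    -- dot product abbreviations
    set p := ξ (u n)
    set q := ξ (x n)
    have hpp : p ⬝ᵥ p = 1 := hξu _
    have hqq : q ⬝ᵥ q = 1 := hξu _
    have hpq : q ⬝ᵥ p = p ⬝ᵥ q := dotProduct_comm _ _
    have hs1 : p ⬝ᵥ q ≤ 1 := by
      have h0 := hself (p - q)
      simp only [sub_dotProduct, dotProduct_sub, hpp, hqq, hpq] at h0
      linarith
    have hDn : D n = 2 - 2 * (p ⬝ᵥ q) := by
      simp only [hDdef, sub_dotProduct, dotProduct_sub, hpp, hqq, hpq]
      show _ = 2 - 2 * (ξ (u n) ⬝ᵥ ξ (x n))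
      rw [hξu, hξu, dotProduct_comm (ξ (x n))]
      ring
    -- left part: v² D ≤ (v p - y q)⬝(v p - y q)
    have hL : (v n) ^ 2 * D n ≤ (v n • p - y n • q) ⬝ᵥ (v n • p - y n • q) := by
      simp only [sub_dotProduct, dotProduct_sub, smul_dotProduct, dotProduct_smul,
        smul_eq_mul, hpp, hqq, hpq, hDn]
      have h2 : (0:ℝ) ≤ (y n - v n) * (y n + v n - 2 * v n * (p ⬝ᵥ q)) := by
        have hvn := (hv n).le
        have := hvy n
        have : v n * (p ⬝ᵥ q) ≤ v n := by nlinarith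
        nlinarith
      nlinarith [h2]
    -- right part: (σ x - σ u)⬝(σ x - σ u) ≤ 4C
    have hR : (σ (x n) - σ (u n)) ⬝ᵥ (σ (x n) - σ (u n)) ≤ 4 * C := by
      have h0 := hself (σ (x n) + σ (u n))
      simp only [sub_dotProduct, dotProduct_sub, add_dotProduct, dotProduct_add] at h0 ⊢
      have hxc := hC (x n)
      have huc := hC (u n)
      nlinarith [dotProduct_comm (σ (x n)) (σ (u n))]
    rw [hvec] at hL
    exact le_trans hL hR
  have hD0 : ∀ n, 0 ≤ D n := fun n => hself _
  -- squeeze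
  have hvsq : Tendsto (fun n => (v n) ^ 2) atTop atTop := by simpa [sq] using hvtop.atTop_mul_atTop₀ hvtop
  have hbound : Tendsto (fun n => 4 * C / (v n) ^ 2) atTop (nhds 0) :=
    tendsto_const_nhds.div_atTop hvsq
  have hDtend0 : Tendsto D atTop (nhds 0) := by
    apply squeeze_zero hD0 _ hbound
    intro n
    have hv2 : 0 < (v n) ^ 2 := pow_pos (hv n) 2
    rw [le_div_iff₀ hv2]
    linarith [hDle n]
  -- continuity limit
  have hcont : Continuous fun ab : ℝ × ℝ => (ξ ab.1 - ξ ab.2) ⬝ᵥ (ξ ab.1 - ξ ab.2) := by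
    have h1 : Continuous fun ab : ℝ × ℝ => ξ ab.1 - ξ ab.2 :=
      (hξc.comp continuous_fst).sub (hξc.comp continuous_snd)
    exact h1.dotProduct h1
  have hDtend : Tendsto D atTop (nhds ((ξ uoo - ξ xoo) ⬝ᵥ (ξ uoo - ξ xoo))) := by
    have := (hcont.tendsto (uoo, xoo)).comp (hu.prodMk_nhds hx)
    exact this
  have hzero : (ξ uoo - ξ xoo) ⬝ᵥ (ξ uoo - ξ xoo) = 0 :=
    tendsto_nhds_unique hDtend hDtend0
  have := dotProduct_self_eq_zero.mp hzero
  exact sub_eq_zero.mp this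
end
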